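/- For all real x, y, z with |x| ≤ 1, |y| ≤ 1, |z| ≤ 1, setting R = x·y − z·√(1−x²)·√(1−y²) and B_y(x,z,R) = 2·(√(1−x²)·y + z·x·√(1−y²) + √(1−x²)·(1−y)·(1−z²))² − (1−R²), one has |B_y(x,z,R)| ≤ 19·(1−R²). -/

import Mathlib

open MeasureTheory Real Set
open scoped ENNReal

noncomputable section

/-- `R = x y − z √(1−x²) √(1−y²)`. -/
def Rker (x y z : ℝ) : ℝ := x * y - z * Real.sqrt (1 - x ^ 2) * Real.sqrt (1 - y ^ 2)

/-- The kernel `B_y(x, z, R)` of the asymmetric generalised translation operator. -/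
def Bker (y x z : ℝ) : ℝ :=
  2 * (Real.sqrt (1 - x ^ 2) * y + z * x * Real.sqrt (1 - y ^ 2) +
      Real.sqrt (1 - x ^ 2) * (1 - y) * (1 - z ^ 2)) ^ 2 - (1 - Rker x y z ^ 2)

/-- The asymmetric generalised translation operator `T_y(f, x)`. -/
def Tgen (y : ℝ) (f : ℝ → ℝ) (x : ℝ) : ℝ :=
  (4 / (Real.pi * (1 - x ^ 2) * (1 + y) ^ 2)) *
    ∫ z in (-1 : ℝ)..1, Bker y x z * f (Rker x y z) / Real.sqrt (1 - z ^ 2)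

/-- The Jacobi differential operator `D_{x,2,2} = (1−x²) d²/dx² − 6x d/dx`. -/
def Dop (f : ℝ → ℝ) (x : ℝ) : ℝ := (1 - x ^ 2) * deriv (deriv f) x - 6 * x * deriv f x

/-- Weighted `L^p` norm `‖f(x) (1−x²)^α‖_p` on `[−1,1]`. -/
def wnorm (p : ℝ≥0∞) (α : ℝ) (f : ℝ → ℝ) : ℝ≥0∞ :=
  eLpNorm (fun x => f x * (1 - x ^ 2) ^ α) p (volume.restrict (Set.Icc (-1 : ℝ) 1))

/-- `h` is absolutely continuous on every closed subinterval of `(−1,1)`: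
it is the integral of its derivative there. -/
def LocAC (h : ℝ → ℝ) : Prop :=
  ∀ a b : ℝ, -1 < a → a ≤ b → b < 1 →
    IntervalIntegrable (deriv h) MeasureTheory.volume a b ∧
      ∀ x ∈ Set.Icc a b, h x = h a + ∫ t in a..x, deriv h t

/-- The system `P` consists of the Jacobi polynomials for the weight `(1−x)^a (1+x)^b`,
normalised by `P n 1 = 1`. -/
def IsJacobiSystem (a b : ℝ) (P : ℕ → ℝ → ℝ) : Prop :=
  (∀ n : ℕ, ∃ q : Polynomial ℝ, q.natDegree = n ∧ ∀ x, P n x = q.eval x) ∧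
  (∀ m n : ℕ, m ≠ n →
    ∫ x in (-1 : ℝ)..1, P m x * P n x * (1 - x) ^ a * (1 + x) ^ b = 0) ∧
  (∀ n : ℕ, P n 1 = 1)

/-- Conditions on `p` and `α` in the main theorems. -/
def ParamOK (p : ℝ≥0∞) (α : ℝ) : Prop :=
  1 ≤ p ∧
  (p = 1 → 1 / 2 < α ∧ α ≤ 1) ∧
  (1 < p → p ≠ ⊤ → 1 - 1 / (2 * p.toReal) < α ∧ α < 3 / 2 - 1 / (2 * p.toReal)) ∧
  (p = ⊤ → 1 ≤ α ∧ α < 3 / 2)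

/-- Best approximation of `f` by algebraic polynomials of degree at most `n − 1`. -/
def bestE (p : ℝ≥0∞) (α : ℝ) (n : ℕ) (f : ℝ → ℝ) : ℝ≥0∞ :=
  ⨅ (q : Polynomial ℝ) (_ : q.natDegree ≤ n - 1), wnorm p α (fun x => f x - q.eval x)

/-- The generalised modulus of smoothness `ω(f, δ)`. -/
def wmod (p : ℝ≥0∞) (α : ℝ) (f : ℝ → ℝ) (δ : ℝ) : ℝ≥0∞ :=
  ⨆ t ∈ Set.Icc (-δ) δ, wnorm p α (fun x => Tgen (Real.cos t) f x - f x)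

/-- The Peetre K-functional between `L^p_α` and the weighted Sobolev-type space. -/
def Kfun (p : ℝ≥0∞) (α : ℝ) (f : ℝ → ℝ) (δ : ℝ) : ℝ≥0∞ :=
  ⨅ (g : ℝ → ℝ) (_ : LocAC (deriv g) ∧ wnorm p α g < ⊤ ∧ wnorm p α (Dop g) < ⊤),
    wnorm p α (fun x => f x - g x) + ENNReal.ofReal (δ ^ 2) * wnorm p α (Dop g)

/-!
With `s = √(1 - x²)`, `A = s y + z x √(1 - y²)` and `t = s (1 - y) (1 - z²)`, the kernel is
`B = 2 (A + t)² - (1 - R²)`. Expanding `1 - R²` in two ways (a spherical law of cosines, once in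
each of `x`, `y`) gives `A² ≤ 1 - R²` and `s² (1 - z²) ≤ 1 - R²`, hence `t² ≤ 4 (1 - R²)` and
`(A + t)² ≤ 9 (1 - R²)`, so that `-(1 - R²) ≤ B ≤ 17 (1 - R²)`.
-/

theorem one_sub_sq_mul_sub_mul_eq {a b c sa sb : ℝ} (ha : sa ^ 2 = 1 - a ^ 2)
    (hb : sb ^ 2 = 1 - b ^ 2) :
    1 - (a * b - c * sa * sb) ^ 2 = (sa * b + c * a * sb) ^ 2 + (1 - b ^ 2) * (1 - c ^ 2) := by
  linear_combination (-(c ^ 2 * sb ^ 2 + b ^ 2)) * ha - c ^ 2 * hb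

theorem add_sq_le_nine_mul {a b S : ℝ} (ha : a ^ 2 ≤ S) (hb : b ^ 2 ≤ 4 * S) :
    (a + b) ^ 2 ≤ 9 * S := by
  nlinarith [sq_nonneg (2 * a - b)]

theorem one_sub_sq_nonneg {x : ℝ} (hx : |x| ≤ 1) : 0 ≤ 1 - x ^ 2 :=
  sub_nonneg.2 ((sq_le_one_iff_abs_le_one x).2 hx)

theorem sq_sqrt_one_sub_sq {x : ℝ} (hx : |x| ≤ 1) : √(1 - x ^ 2) ^ 2 = 1 - x ^ 2 :=
  sq_sqrt (one_sub_sq_nonneg hx)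

section Kernel

variable {x y z : ℝ}

theorem one_sub_Rker_sq_eq_left (hx : |x| ≤ 1) (hy : |y| ≤ 1) :
    1 - Rker x y z ^ 2 =
      (√(1 - x ^ 2) * y + z * x * √(1 - y ^ 2)) ^ 2 + (1 - y ^ 2) * (1 - z ^ 2) :=
  one_sub_sq_mul_sub_mul_eq (sq_sqrt_one_sub_sq hx) (sq_sqrt_one_sub_sq hy)

theorem one_sub_Rker_sq_eq_right (hx : |x| ≤ 1) (hy : |y| ≤ 1) :
    1 - Rker x y z ^ 2 =
      (√(1 - y ^ 2) * x + z * y * √(1 - x ^ 2)) ^ 2 + (1 - x ^ 2) * (1 - z ^ 2) := by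
  rw [Rker, mul_comm x y, mul_right_comm z]
  exact one_sub_sq_mul_sub_mul_eq (sq_sqrt_one_sub_sq hy) (sq_sqrt_one_sub_sq hx)

theorem sq_le_one_sub_Rker_sq (hx : |x| ≤ 1) (hy : |y| ≤ 1) (hz : |z| ≤ 1) :
    (√(1 - x ^ 2) * y + z * x * √(1 - y ^ 2)) ^ 2 ≤ 1 - Rker x y z ^ 2 := by
  rw [one_sub_Rker_sq_eq_left hx hy]
  have := mul_nonneg (one_sub_sq_nonneg hy) (one_sub_sq_nonneg hz)
  linarith

theorem one_sub_sq_mul_one_sub_sq_le_one_sub_Rker_sq (hx : |x| ≤ 1) (hy : |y| ≤ 1) :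
    (1 - x ^ 2) * (1 - z ^ 2) ≤ 1 - Rker x y z ^ 2 := by
  rw [one_sub_Rker_sq_eq_right hx hy]
  exact le_add_of_nonneg_left (sq_nonneg _)

theorem sq_mul_one_sub_mul_one_sub_sq_le (hx : |x| ≤ 1) (hy : |y| ≤ 1) (hz : |z| ≤ 1) :
    (√(1 - x ^ 2) * (1 - y) * (1 - z ^ 2)) ^ 2 ≤ 4 * (1 - Rker x y z ^ 2) := by
  obtain ⟨hy₁, hy₂⟩ := abs_le.mp hy
  have hz₀ := one_sub_sq_nonneg hz
  have hy_z : (1 - y) ^ 2 * (1 - z ^ 2) ≤ 4 := by nlinarith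
  calc (√(1 - x ^ 2) * (1 - y) * (1 - z ^ 2)) ^ 2
      = (1 - x ^ 2) * (1 - z ^ 2) * ((1 - y) ^ 2 * (1 - z ^ 2)) := by
        rw [mul_pow, mul_pow, sq_sqrt_one_sub_sq hx]; ring
    _ ≤ (1 - Rker x y z ^ 2) * 4 :=
        mul_le_mul (one_sub_sq_mul_one_sub_sq_le_one_sub_Rker_sq hx hy) hy_z
          (mul_nonneg (sq_nonneg _) hz₀) ((sq_nonneg _).trans (sq_le_one_sub_Rker_sq hx hy hz))
    _ = 4 * (1 - Rker x y z ^ 2) := mul_comm _ _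

end Kernel

theorem B_bound (x y z : ℝ) (hx : |x| ≤ 1) (hy : |y| ≤ 1) (hz : |z| ≤ 1) :
    |Bker y x z| ≤ 19 * (1 - Rker x y z ^ 2) := by
  have hA := sq_le_one_sub_Rker_sq hx hy hz
  have hsum := add_sq_le_nine_mul hA (sq_mul_one_sub_mul_one_sub_sq_le hx hy hz)
  have hS : 0 ≤ 1 - Rker x y z ^ 2 := (sq_nonneg _).trans hA
  rw [Bker, abs_le]
  constructor <;> nlinarith
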